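/- Let n be a positive integer, let R be a commutative ring, let u_{i,j} ∈ R for each i ∈ {1,…,n} and j ∈ {1,…,n+1}, and let p_1, …, p_n ∈ R. Then Σ_{k=1}^{n} det( u_{i, j+[k=i]} − p_i · u_{i,j} · [k=i] )_{i,j ∈ {1,…,n}} = det( u_{i, j+[n=j]} )_{i,j ∈ {1,…,n}} − (Σ_{k=1}^{n} p_k) · det( u_{i,j} )_{i,j ∈ {1,…,n}}. -/

import Mathlib

/-- A partition, stored `0`-indexed: `p.f k` is the part `λ_{k+1}`. -/
structure YDPartition where
  f : ℕ → ℕ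
  antitone' : ∀ ⦃i j : ℕ⦄, i ≤ j → f j ≤ f i
  eventually_zero' : ∃ N : ℕ, ∀ i : ℕ, N ≤ i → f i = 0

namespace YDPartition

/-- `p.get i` is the part `λ_i` of the partition `p = λ`, for `i ≥ 1`. -/
def get (p : YDPartition) (i : ℕ) : ℕ := p.f (i - 1)

/-- `μ ⊆ λ`, i.e. `μ_i ≤ λ_i` for all `i ≥ 1`. -/
def Sub (mu lam : YDPartition) : Prop := ∀ i : ℕ, 1 ≤ i → mu.get i ≤ lam.get i

/-- The empty partition `∅ = (0, 0, 0, …)`. -/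
def empty : YDPartition where
  f := fun _ => 0
  antitone' := fun _ _ _ => le_rfl
  eventually_zero' := ⟨0, fun _ _ => rfl⟩

/-- The `k`-th entry `λ^t_k = |{i ≥ 1 : λ_i ≥ k}|` of the conjugate partition
(meaningful for `k ≥ 1`). -/
noncomputable def conjGet (p : YDPartition) (k : ℕ) : ℕ :=
  Set.ncard {i : ℕ | 1 ≤ i ∧ k ≤ p.get i}

/-- `Δ(λ) = {λ_i − i : i ≥ 1} ⊆ ℤ`. -/
def delta (p : YDPartition) : Set ℤ :=
  {d : ℤ | ∃ i : ℕ, 1 ≤ i ∧ d = (p.get i : ℤ) - (i : ℤ)}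

/-- `Δ(λ^t) = {λ^t_i − i : i ≥ 1} ⊆ ℤ`. -/
noncomputable def deltaConj (p : YDPartition) : Set ℤ :=
  {d : ℤ | ∃ i : ℕ, 1 ≤ i ∧ d = (p.conjGet i : ℤ) - (i : ℤ)}

/-- `μ ⋖ ν` : the partition `ν` is obtained from `μ` by increasing one entry by `1`. -/
def Covers (mu nu : YDPartition) : Prop :=
  ∃ k : ℕ, 1 ≤ k ∧ nu.get k = mu.get k + 1 ∧
    ∀ i : ℕ, 1 ≤ i → i ≠ k → nu.get i = mu.get i

end YDPartition

/-- The skew Young diagram `Y(λ/μ)`: all boxes `(i, j)` with `i ≥ 1` and `μ_i < j ≤ λ_i`. -/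
def skewCells (lam mu : YDPartition) : Set (ℕ × ℕ) :=
  {c : ℕ × ℕ | 1 ≤ c.1 ∧ mu.get c.1 < c.2 ∧ c.2 ≤ lam.get c.1}

/-- The Young diagram `Y(λ) = Y(λ/∅)`. -/
def cells (lam : YDPartition) : Set (ℕ × ℕ) := skewCells lam YDPartition.empty

/-- The hook `H_λ(c)` of a box `c` in `Y(λ)`. -/
def hook (lam : YDPartition) (c : ℕ × ℕ) : Set (ℕ × ℕ) :=
  {d : ℕ × ℕ | d ∈ cells lam ∧ ((d.1 = c.1 ∧ c.2 ≤ d.2) ∨ (d.2 = c.2 ∧ c.1 ≤ d.1))}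

/-- The hook length `h_λ(c) = |H_λ(c)|`. -/
noncomputable def hookLength (lam : YDPartition) (c : ℕ × ℕ) : ℕ := (hook lam c).ncard

/-- An excited move replaces a box `(i, j)` of the diagram `D` by `(i+1, j+1)`, provided
that none of `(i+1, j)`, `(i, j+1)`, `(i+1, j+1)` lies in `D`. -/
def ExcitedMove (D E : Set (ℕ × ℕ)) : Prop :=
  ∃ i j : ℕ, (i, j) ∈ D ∧ (i + 1, j) ∉ D ∧ (i, j + 1) ∉ D ∧ (i + 1, j + 1) ∉ D ∧
    E = insert (i + 1, j + 1) (D \ {(i, j)})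

/-- `E` is an excitation of `D`: it is obtained from `D` by a finite sequence of
excited moves. -/
def IsExcitation (D E : Set (ℕ × ℕ)) : Prop := Relation.ReflTransGen ExcitedMove D E

/-- `𝓔(λ/μ)`: the set of all excitations `E` of `Y(μ)` satisfying `E ⊆ Y(λ)`. -/
def excitations (lam mu : YDPartition) : Set (Set (ℕ × ℕ)) :=
  {E : Set (ℕ × ℕ) | IsExcitation (cells mu) E ∧ E ⊆ cells lam}

/-- Standard tableaux of shape `λ/μ`, encoded as functions `ℕ × ℕ → ℕ` that vanish outside
of `Y(λ/μ)`, restrict to a bijection `Y(λ/μ) → {1, …, n}` where `n = |Y(λ/μ)|`, and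
increase left-to-right along rows and top-to-bottom down columns. -/
def SYT (lam mu : YDPartition) : Set (ℕ × ℕ → ℕ) :=
  {T : ℕ × ℕ → ℕ |
    (∀ c : ℕ × ℕ, c ∉ skewCells lam mu → T c = 0) ∧
    Set.BijOn T (skewCells lam mu) (Set.Icc 1 (skewCells lam mu).ncard) ∧
    (∀ i j : ℕ, (i, j) ∈ skewCells lam mu → (i, j + 1) ∈ skewCells lam mu →
      T (i, j) < T (i, j + 1)) ∧
    (∀ i j : ℕ, (i, j) ∈ skewCells lam mu → (i + 1, j) ∈ skewCells lam mu →
      T (i, j) < T (i + 1, j))}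

/-- Semistandard tableaux of shape `μ`, encoded as functions `ℕ × ℕ → ℕ` that vanish
outside of `Y(μ)`, take positive values on `Y(μ)`, increase weakly along rows and
strictly down columns. -/
def SSYT (mu : YDPartition) : Set (ℕ × ℕ → ℕ) :=
  {T : ℕ × ℕ → ℕ |
    (∀ c : ℕ × ℕ, c ∉ cells mu → T c = 0) ∧
    (∀ c ∈ cells mu, 1 ≤ T c) ∧
    (∀ i j : ℕ, (i, j) ∈ cells mu → (i, j + 1) ∈ cells mu → T (i, j) ≤ T (i, j + 1)) ∧
    (∀ i j : ℕ, (i, j) ∈ cells mu → (i + 1, j) ∈ cells mu → T (i, j) < T (i + 1, j))}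

/-- `b`-flagged semistandard tableaux of shape `μ`: all entries in row `i` are `≤ b i`. -/
def FSSYT (mu : YDPartition) (b : ℕ → ℕ) : Set (ℕ × ℕ → ℕ) :=
  {T ∈ SSYT mu | ∀ c ∈ cells mu, T c ≤ b c.1}

/-- The flagging induced by `λ/μ`: `b_i = max {k ≥ 0 : λ_k − k ≥ μ_i − i}`, where
`λ_0 = +∞` (so that `k = 0` always belongs to the set). -/
noncomputable def inducedFlagging (lam mu : YDPartition) (i : ℕ) : ℕ :=
  sSup {k : ℕ | k = 0 ∨ (mu.get i : ℤ) - (i : ℤ) ≤ (lam.get k : ℤ) - (k : ℤ)}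

/-- The diagram `D(T) = {(T(i,j), T(i,j) + j − i) : (i,j) ∈ Y(μ)}` associated to a
semistandard tableau `T` of shape `μ` (note that `T(i,j) ≥ i` for semistandard `T`,
so the truncated subtraction is exact). -/
def excitedDiagram (mu : YDPartition) (T : ℕ × ℕ → ℕ) : Set (ℕ × ℕ) :=
  (fun c : ℕ × ℕ => (T c, T c + c.2 - c.1)) '' cells mu

/-- The field of rational functions over `ℚ` in the indeterminates `z_i`, `i ∈ ℤ`. -/
abbrev KK : Type := FractionRing (MvPolynomial ℤ ℚ)

/-- The indeterminate `z_i` viewed inside `KK`. -/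
noncomputable def Zvar (i : ℤ) : KK :=
  algebraMap (MvPolynomial ℤ ℚ) KK (MvPolynomial.X i)

/-- The content `c_T(k) = j − i`, where `(i, j)` is the box of `T` containing the
entry `k`. -/
noncomputable def contentOf (T : ℕ × ℕ → ℕ) (k : ℕ) : ℤ :=
  ((Classical.epsilon fun c : ℕ × ℕ => T c = k).2 : ℤ) -
    ((Classical.epsilon fun c : ℕ × ℕ => T c = k).1 : ℤ)

/-- `z_T = 1 / ∏_{k=1}^n (z_{c_T(k)} + z_{c_T(k+1)} + ⋯ + z_{c_T(n)})` for a standard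
tableau `T` of shape `λ/μ`, where `n = |Y(λ/μ)|`. -/
noncomputable def zT (lam mu : YDPartition) (T : ℕ × ℕ → ℕ) : KK :=
  (∏ k ∈ Finset.Icc 1 (skewCells lam mu).ncard,
    ∑ l ∈ Finset.Icc k (skewCells lam mu).ncard, Zvar (contentOf T l))⁻¹

/-- The algebraic hook length `h_λ(c; z) = Σ_{(i,j) ∈ H_λ(c)} z_{j−i}`. -/
noncomputable def hookZ (lam : YDPartition) (c : ℕ × ℕ) : KK :=
  ∑ᶠ d ∈ hook lam c, Zvar ((d.2 : ℤ) - (d.1 : ℤ))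

/-- The polynomial ring `ℤ[x_1, x_2, …, y_1, y_2, …]`. -/
abbrev Rxy : Type := MvPolynomial (ℕ ⊕ ℕ) ℤ

/-- The indeterminate `x_i` for `i ≥ 1`, with the convention `x_i = 0` for `i ≤ 0`. -/
noncomputable def xv (i : ℤ) : Rxy :=
  if 1 ≤ i then MvPolynomial.X (Sum.inl i.toNat) else 0

/-- The indeterminate `y_i` for `i ≥ 1`, with the convention `y_i = 0` for `i ≤ 0`. -/
noncomputable def yv (i : ℤ) : Rxy :=
  if 1 ≤ i then MvPolynomial.X (Sum.inr i.toNat) else 0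

/-- `s_λ[μ] = Σ_{D ∈ 𝓔(λ/μ)} ∏_{(i,j) ∈ D} (x_i + y_j)`. -/
noncomputable def slam (lam mu : YDPartition) : Rxy :=
  ∑ᶠ D ∈ excitations lam mu, ∏ᶠ c ∈ D, (xv (c.1 : ℤ) + yv (c.2 : ℤ))

/-- The `h`-polynomial `h(a, b, c) = Σ_{1 ≤ i_1 ≤ ⋯ ≤ i_a ≤ b} ∏_{j=1}^a
(x_{i_j} + y_{i_j + (j−1) + c})`, with `h(a, b, c) = 0` for `a < 0`
(and `h(0, b, c) = 1`). -/
noncomputable def hpoly (a : ℤ) (b : ℕ) (c : ℤ) : Rxy :=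
  if a < 0 then 0
  else ∑ᶠ t ∈ {t : Fin a.toNat → ℕ | (∀ j, t j ∈ Finset.Icc 1 b) ∧ Monotone t},
    ∏ j : Fin a.toNat, (xv (t j : ℤ) + yv ((t j : ℤ) + ((j : ℕ) : ℤ) + c))

/-- The element `h_{b; q}[d] = Σ_{1 ≤ i_1 ≤ ⋯ ≤ i_q ≤ b} ∏_{j=1}^q u_{i_j, j−d}` of `R`,
understood to be `0` if `q < 0` (and `1` if `q = 0`). -/
noncomputable def hGen {R : Type*} [CommRing R] (u : ℤ → ℤ → R) (b : ℕ) (q d : ℤ) : R :=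
  if q < 0 then 0
  else ∑ᶠ t ∈ {t : Fin q.toNat → ℕ | (∀ j, t j ∈ Finset.Icc 1 b) ∧ Monotone t},
    ∏ j : Fin q.toNat, u (t j : ℤ) (((j : ℕ) : ℤ) + 1 - d)

open Polynomial

lemma coeff_one_det {R : Type*} [CommRing R] {n : ℕ} (A B : Matrix (Fin n) (Fin n) R) :
    (Matrix.det (Matrix.of fun i j => Polynomial.C (A i j) +
        Polynomial.X * Polynomial.C (B i j))).coeff 1
      = ∑ k : Fin n, Matrix.det (Matrix.of fun i j => if k = i then B i j else A i j) := by
  classical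
  set f := (Matrix.detRowAlternating : (Fin n → R[X]) [⋀^Fin n]→ₗ[R[X]] R[X]) with hf
  have key : Matrix.det (Matrix.of fun i j => Polynomial.C (A i j) +
        Polynomial.X * Polynomial.C (B i j))
      = ∑ s : Finset (Fin n), Polynomial.X ^ s.card *
          Polynomial.C (Matrix.det (Matrix.of fun i j =>
            if i ∈ s then B i j else A i j)) := by
    have hM : (Matrix.of fun i j => Polynomial.C (A i j) + Polynomial.X * Polynomial.C (B i j))
        = ((fun i j => ((Polynomial.X : R[X]) • Polynomial.C (B i j) : R[X])) +
           (fun i j => Polynomial.C (A i j))) := by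
      funext i j
      simp [add_comm, smul_eq_mul]
    rw [show Matrix.det (Matrix.of fun i j => Polynomial.C (A i j) +
        Polynomial.X * Polynomial.C (B i j)) = f ((fun i j => (Polynomial.X : R[X]) • Polynomial.C (B i j)) +
           (fun i j => Polynomial.C (A i j))) by rw [← hM]; rfl]
    have hadd : f ((fun i j => ((Polynomial.X : R[X]) • Polynomial.C (B i j) : R[X])) +
          fun i j => Polynomial.C (A i j))
        = ∑ s : Finset (Fin n), f (s.piecewise
            (fun i j => ((Polynomial.X : R[X]) • Polynomial.C (B i j) : R[X]))
            (fun i j => Polynomial.C (A i j))) :=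
      f.toMultilinearMap.map_add_univ _ _
    rw [hadd]
    refine Finset.sum_congr rfl fun s _ => ?_
    have hpw : s.piecewise (fun i j => ((Polynomial.X : R[X]) • Polynomial.C (B i j) : R[X]))
          (fun i j => Polynomial.C (A i j))
        = s.piecewise (fun i => ((fun _ => (Polynomial.X : R[X])) i • (s.piecewise
            (fun i j => Polynomial.C (B i j)) (fun i j => Polynomial.C (A i j))) i : Fin n → R[X]))
          (s.piecewise (fun i j => Polynomial.C (B i j)) (fun i j => Polynomial.C (A i j))) := by
      ext i j
      by_cases hi : i ∈ s <;> simp [Finset.piecewise, hi]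
    have hsm : f (s.piecewise (fun i => ((fun _ => (Polynomial.X : R[X])) i • (s.piecewise
            (fun i j => Polynomial.C (B i j)) (fun i j => Polynomial.C (A i j))) i : Fin n → R[X]))
          (s.piecewise (fun i j => Polynomial.C (B i j)) (fun i j => Polynomial.C (A i j))))
        = (∏ _i ∈ s, (Polynomial.X : R[X])) • f (s.piecewise
            (fun i j => Polynomial.C (B i j)) (fun i j => Polynomial.C (A i j))) :=
      f.toMultilinearMap.map_piecewise_smul _ _ _
    rw [hpw, hsm]
    have : f (s.piecewise (fun i j => Polynomial.C (B i j)) (fun i j => Polynomial.C (A i j)))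
        = Polynomial.C (Matrix.det (Matrix.of fun i j => if i ∈ s then B i j else A i j)) := by
      rw [(Polynomial.C : R →+* R[X]).map_det]
      congr 1
      ext i j
      by_cases hi : i ∈ s <;> simp [Finset.piecewise, hi, Matrix.map_apply]
    rw [this, Finset.prod_const, smul_eq_mul]
  rw [key, Polynomial.finset_sum_coeff]
  have hcoeff : ∀ s : Finset (Fin n), (Polynomial.X ^ s.card *
      Polynomial.C (Matrix.det (Matrix.of fun i j => if i ∈ s then B i j else A i j))).coeff 1
      = if s.card = 1 then Matrix.det (Matrix.of fun i j => if i ∈ s then B i j else A i j)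
        else 0 := by
    intro s
    rw [mul_comm, Polynomial.C_mul_X_pow_eq_monomial, Polynomial.coeff_monomial]
  simp only [hcoeff]
  rw [← Finset.sum_filter]
  have himg : Finset.univ.filter (fun s : Finset (Fin n) => s.card = 1)
      = Finset.univ.image (fun k : Fin n => ({k} : Finset (Fin n))) := by
    ext s
    simp [Finset.card_eq_one, eq_comm]
  rw [himg, Finset.sum_image (fun a _ b _ h => Finset.singleton_injective h)]
  refine Finset.sum_congr rfl fun k _ => ?_
  congr 1
  ext i j
  by_cases h : k = i
  · simp [h]
  · have h' : ¬ i = k := fun e => h e.symm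
    simp [h, h']

/-- For a positive integer `n`, elements `u_{i,j}` (`i ∈ {1,…,n}`, `j ∈ {1,…,n+1}`)
and `p_1, …, p_n` of a commutative ring `R`, one has (with `[·]` the Iverson bracket)
`Σ_{k=1}^n det( u_{i, j+[k=i]} − p_i u_{i,j} [k=i] )
  = det( u_{i, j+[n=j]} ) − (Σ_{k=1}^n p_k) det( u_{i,j} )`. -/
theorem sum_det_shift_identity {R : Type*} [CommRing R] (n : ℕ) (hn : 0 < n)
    (u : ℕ → ℕ → R) (p : ℕ → R) :
    (∑ k : Fin n, Matrix.det (Matrix.of fun i j : Fin n =>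
        u ((i : ℕ) + 1) (((j : ℕ) + 1) + if k = i then 1 else 0) -
          p ((i : ℕ) + 1) * u ((i : ℕ) + 1) ((j : ℕ) + 1) *
            (if k = i then (1 : R) else 0))) =
      Matrix.det (Matrix.of fun i j : Fin n =>
          u ((i : ℕ) + 1) (((j : ℕ) + 1) + if n = (j : ℕ) + 1 then 1 else 0)) -
        (∑ k : Fin n, p ((k : ℕ) + 1)) *
          Matrix.det (Matrix.of fun i j : Fin n => u ((i : ℕ) + 1) ((j : ℕ) + 1)) := by
    classical
  set A0 : Matrix (Fin n) (Fin n) R := Matrix.of fun i j => u ((i : ℕ) + 1) ((j : ℕ) + 1) with hA0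
  set B0 : Matrix (Fin n) (Fin n) R :=
    Matrix.of fun i j => u ((i : ℕ) + 1) ((j : ℕ) + 1 + 1) with hB0
  -- Step 1: each summand splits by row-multilinearity
  have step1 : ∀ k : Fin n,
      Matrix.det (Matrix.of fun i j : Fin n =>
        u ((i : ℕ) + 1) (((j : ℕ) + 1) + if k = i then 1 else 0) -
          p ((i : ℕ) + 1) * u ((i : ℕ) + 1) ((j : ℕ) + 1) *
            (if k = i then (1 : R) else 0))
      = Matrix.det (Matrix.of fun i j => if k = i then B0 i j else A0 i j)
        - p ((k : ℕ) + 1) * Matrix.det A0 := by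
    intro k
    have hL : (Matrix.of fun i j : Fin n =>
        u ((i : ℕ) + 1) (((j : ℕ) + 1) + if k = i then 1 else 0) -
          p ((i : ℕ) + 1) * u ((i : ℕ) + 1) ((j : ℕ) + 1) *
            (if k = i then (1 : R) else 0))
        = Matrix.updateRow A0 k (B0 k + (-(p ((k : ℕ) + 1))) • A0 k) := by
      ext i j
      by_cases h : k = i
      · subst h
        simp [Matrix.updateRow_self, hA0, hB0, smul_eq_mul]
        ring
      · rw [Matrix.of_apply, Matrix.updateRow_ne (fun e => h e.symm)]
        simp [h, hA0]
    rw [hL, Matrix.det_updateRow_add, Matrix.det_updateRow_smul,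
      Matrix.updateRow_eq_self]
    have hrow : A0.updateRow k (B0 k) = Matrix.of fun i j => if k = i then B0 i j else A0 i j := by
      ext i j
      by_cases h : k = i
      · subst h; simp [Matrix.updateRow_self]
      · rw [Matrix.updateRow_ne (fun e => h e.symm), Matrix.of_apply, if_neg h]
    rw [hrow]
    ring
  rw [Finset.sum_congr rfl (fun k _ => step1 k), Finset.sum_sub_distrib, ← Finset.sum_mul]
  congr 1
  -- Step 2: row-shifted sum equals column-shifted sum via the polynomial matrix
  have hsum : (∑ k : Fin n, Matrix.det (Matrix.of fun i j => if k = i then B0 i j else A0 i j))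
      = ∑ k : Fin n, Matrix.det (Matrix.of fun i j => if k = j then B0 i j else A0 i j) := by
    have htrans : (Matrix.det (Matrix.of fun i j => Polynomial.C (A0 i j) +
          Polynomial.X * Polynomial.C (B0 i j)))
        = Matrix.det (Matrix.of fun i j => Polynomial.C (A0.transpose i j) +
          Polynomial.X * Polynomial.C (B0.transpose i j)) := by
      rw [← Matrix.det_transpose]
      congr 1
    rw [← coeff_one_det A0 B0, htrans, coeff_one_det]
    refine Finset.sum_congr rfl fun k _ => ?_
    rw [← Matrix.det_transpose]
    congr 1
  rw [hsum]
  -- Step 3: only the last column-shift survives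
  have hlast : (n - 1 : ℕ) < n := by omega
  rw [Finset.sum_eq_single_of_mem (⟨n - 1, hlast⟩ : Fin n) (Finset.mem_univ _) ?_]
  · congr 1
    ext i j
    by_cases h : (⟨n - 1, hlast⟩ : Fin n) = j
    · have hval : n - 1 = (j : ℕ) := congrArg Fin.val h
      have hj : n = (j : ℕ) + 1 := by omega
      rw [Matrix.of_apply, if_pos h, Matrix.of_apply, if_pos hj, hB0]
      rfl
    · have hj : ¬ (n = (j : ℕ) + 1) := by
        intro hc
        apply h
        apply Fin.ext
        show n - 1 = (j : ℕ)
        omega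
      rw [Matrix.of_apply, if_neg h, Matrix.of_apply, if_neg hj, hA0]
      rfl
  · intro k _ hk
    have hkv : (k : ℕ) ≠ n - 1 := fun e => hk (Fin.ext e)
    have hkn : (k : ℕ) + 1 < n := by omega
    have h1 : ¬ (k = (⟨(k : ℕ) + 1, hkn⟩ : Fin n)) := by
      intro e
      have hval : (k : ℕ) = (k : ℕ) + 1 := congrArg Fin.val e
      omega
    refine Matrix.det_zero_of_column_eq (M := Matrix.of fun i j =>
        if k = j then B0 i j else A0 i j) (i := k) (j := ⟨(k : ℕ) + 1, hkn⟩) h1 fun i => ?_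
    rw [Matrix.of_apply, if_pos rfl, Matrix.of_apply, if_neg h1, hB0, hA0]
    rfl
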